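/- Any minimum-total-cost perturbation Δ̂ making the target path p* the shortest s–t path satisfies Δ̂(e) = 0 for every edge e on p*; i.e., an optimal solution to the Force Path problem does not perturb edges of p*. -/
import Mathlib


/-- Any minimum-total-cost perturbation making the target path `pstar` the shortest
s–t path vanishes on every edge of `pstar`. Paths are finite sets of edges. -/
theorem force_path_optimal_no_perturbation_on_target
    {E : Type*} [Fintype E] [DecidableEq E]
    (w : E → ℝ) (hw : ∀ e, 0 ≤ w e)
    (isPath : Finset E → Prop) (pstar : Finset E) (hpstar : isPath pstar)
    (Δhat : E → ℝ) (hΔhat : ∀ e, 0 ≤ Δhat e)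
    (hfeas : ∀ p : Finset E, isPath p →
      ∑ x ∈ pstar, (w x + Δhat x) ≤ ∑ x ∈ p, (w x + Δhat x))
    (hopt : ∀ Δ : E → ℝ, (∀ e, 0 ≤ Δ e) →
      (∀ p : Finset E, isPath p →
        ∑ x ∈ pstar, (w x + Δ x) ≤ ∑ x ∈ p, (w x + Δ x)) →
      ∑ e, Δhat e ≤ ∑ e, Δ e) :
    ∀ e ∈ pstar, Δhat e = 0 := by
  set Δ' : E → ℝ := fun e => if e ∈ pstar then 0 else Δhat e with hΔ'def
  have hΔ'nonneg : ∀ e, 0 ≤ Δ' e := by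
    intro e; simp only [hΔ'def]; split <;> [rfl; exact hΔhat e]
  have hΔ'le : ∀ e, Δ' e ≤ Δhat e := by
    intro e; simp only [hΔ'def]; split <;> [exact hΔhat e; rfl]
  have hfeas' : ∀ p : Finset E, isPath p →
      ∑ x ∈ pstar, (w x + Δ' x) ≤ ∑ x ∈ p, (w x + Δ' x) := by
    intro p hp
    have h1 : ∑ x ∈ pstar, (w x + Δ' x) = ∑ x ∈ pstar, w x := by
      apply Finset.sum_congr rfl
      intro x hx; simp [hΔ'def, hx]
    -- ∑_p Δ' = ∑_p Δhat - ∑_{p ∩ pstar} Δhat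
    have h2 : ∑ x ∈ p, Δ' x = ∑ x ∈ p, Δhat x - ∑ x ∈ p ∩ pstar, Δhat x := by
      rw [← Finset.sum_filter_add_sum_filter_not p (· ∈ pstar) Δ']
      have e1 : ∑ x ∈ p.filter (· ∈ pstar), Δ' x = 0 := by
        apply Finset.sum_eq_zero; intro x hx
        simp only [Finset.mem_filter] at hx
        simp [hΔ'def, hx.2]
      have e2 : ∑ x ∈ p.filter (¬ · ∈ pstar), Δ' x
          = ∑ x ∈ p.filter (¬ · ∈ pstar), Δhat x := by
        apply Finset.sum_congr rfl; intro x hx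
        simp only [Finset.mem_filter] at hx
        simp [hΔ'def, hx.2]
      have e3 : ∑ x ∈ p ∩ pstar, Δhat x = ∑ x ∈ p.filter (· ∈ pstar), Δhat x := by
        rw [Finset.filter_mem_eq_inter]
      have := Finset.sum_filter_add_sum_filter_not p (· ∈ pstar) Δhat
      rw [e1, e2, e3, zero_add]
      linarith
    have h3 : ∑ x ∈ p ∩ pstar, Δhat x ≤ ∑ x ∈ pstar, Δhat x :=
      Finset.sum_le_sum_of_subset_of_nonneg (Finset.inter_subset_right)
        (fun i _ _ => hΔhat i)
    have h4 := hfeas p hp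
    rw [Finset.sum_add_distrib, Finset.sum_add_distrib] at h4
    rw [h1, Finset.sum_add_distrib, h2]
    linarith
  have hle := hopt Δ' hΔ'nonneg hfeas'
  have heq : ∀ e, Δhat e = Δ' e := by
    have := Finset.sum_le_sum (fun e (_ : e ∈ Finset.univ) => hΔ'le e)
    intro e
    by_contra h
    have hlt : Δ' e < Δhat e := lt_of_le_of_ne (hΔ'le e) (Ne.symm h)
    have : ∑ x, Δ' x < ∑ x, Δhat x :=
      Finset.sum_lt_sum (fun i _ => hΔ'le i) ⟨e, Finset.mem_univ e, hlt⟩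
    linarith
  intro e he
  have := heq e
  simpa [hΔ'def, he] using this
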